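/- Let M ⊆ ℝ^N be an embedded C¹ submanifold. Fix k distinct points z₁, …, z_k ∈ M and linear functionals L_i : T_{z_i}M → ℝ for i = 1, …, k, where T_{z_i}M is identified with a linear subspace of ℝ^N. Then there exists an N-variate polynomial p of degree at most 2k−1 such that the differential of p restricted to M at z_i equals L_i for every i. -/

import Mathlib

/-!
Extend each `Lᵢ` to a linear functional `ℓᵢ` on `ℝ^N` and put `qⱼ(x) = |x - zⱼ|²`, which vanishes
to second order at `zⱼ`. Then
`p(x) = ∑ᵢ ℓᵢ(x - zᵢ) ∏_{j ≠ i} qⱼ(x) / ∏_{j ≠ i} qⱼ(zᵢ)`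
works: at `z_m` every term with `i ≠ m` is divisible by `q_m` and so has zero differential, while
the `m`-th term is `ℓ_m(x - z_m)`, which vanishes at `z_m`, times a factor equal to `1` at `z_m`,
so its differential there is `ℓ_m`. Each term has degree `1 + 2(k - 1)`.
-/

open MvPolynomial Finset

section Calculus

variable {𝕜 σ : Type*} [NontriviallyNormedField 𝕜] [CompleteSpace 𝕜] [Fintype σ]

theorem hasFDerivAt_eval_mul_of_eval_eq_zero {q r : MvPolynomial σ 𝕜} {z : σ → 𝕜}
    {q' : (σ → 𝕜) →L[𝕜] 𝕜} (hq : HasFDerivAt (fun x => eval x q) q' z) (hq0 : eval z q = 0) :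
    HasFDerivAt (fun x => eval x (q * r)) (eval z r • q') z := by
  have hr := (AnalyticOnNhd.eval_mvPolynomial r z (Set.mem_univ z)).differentiableAt
  simp only [map_mul]
  exact (hq.fun_mul hr.hasFDerivAt).congr_fderiv (by ext; simp [hq0])

theorem hasFDerivAt_eval_eq_zero_of_dvd {q p : MvPolynomial σ 𝕜} {z : σ → 𝕜}
    (hq : HasFDerivAt (fun x => eval x q) (0 : (σ → 𝕜) →L[𝕜] 𝕜) z) (hq0 : eval z q = 0)
    (hqp : q ∣ p) :
    HasFDerivAt (fun x => eval x p) (0 : (σ → 𝕜) →L[𝕜] 𝕜) z := by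
  obtain ⟨r, rfl⟩ := hqp
  exact (hasFDerivAt_eval_mul_of_eval_eq_zero (r := r) hq hq0).congr_fderiv (by ext; simp)

end Calculus

variable {σ : Type*} [Fintype σ]

noncomputable def sqDist (w : σ → ℝ) : MvPolynomial σ ℝ :=
  ∑ t, (X t - C (w t)) ^ 2

theorem eval_sqDist (w x : σ → ℝ) : eval x (sqDist w) = ∑ t, (x t - w t) ^ 2 := by
  simp [sqDist]

theorem eval_sqDist_ne_zero {w x : σ → ℝ} (h : x ≠ w) : eval x (sqDist w) ≠ 0 := by
  rw [eval_sqDist]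
  intro h0
  refine h (funext fun t => sub_eq_zero.1 (pow_eq_zero_iff two_ne_zero |>.1 ?_))
  exact (sum_eq_zero_iff_of_nonneg fun t _ => sq_nonneg (x t - w t)).1 h0 t (mem_univ t)

theorem hasFDerivAt_eval_sqDist_self (w : σ → ℝ) :
    HasFDerivAt (fun x => eval x (sqDist w)) (0 : (σ → ℝ) →L[ℝ] ℝ) w := by
  simp_rw [eval_sqDist]
  simpa using HasFDerivAt.fun_sum (u := univ) fun t _ =>
    ((hasFDerivAt_apply (𝕜 := ℝ) t w).sub_const (w t)).pow 2

theorem totalDegree_sqDist_le (w : σ → ℝ) : (sqDist w).totalDegree ≤ 2 := by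
  refine (totalDegree_finsetSum _ _).trans (Finset.sup_le fun t _ => ?_)
  refine (totalDegree_pow _ 2).trans ?_
  have := (totalDegree_sub_C_le (X t : MvPolynomial σ ℝ) (w t)).trans (totalDegree_X t).le
  omega

variable {ι : Type*} [Fintype ι] [DecidableEq ι]

noncomputable def bumpPoly (z : ι → σ → ℝ) (i : ι) : MvPolynomial σ ℝ :=
  ∏ j ∈ univ.erase i, sqDist (z j)

theorem eval_bumpPoly_self_ne_zero {z : ι → σ → ℝ} (hz : Function.Injective z) (i : ι) :
    eval (z i) (bumpPoly z i) ≠ 0 := by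
  simp only [bumpPoly, map_prod]
  exact prod_ne_zero_iff.2 fun j hj => eval_sqDist_ne_zero (hz.ne (ne_of_mem_erase hj).symm)

theorem sqDist_dvd_bumpPoly (z : ι → σ → ℝ) {i m : ι} (h : m ≠ i) :
    sqDist (z m) ∣ bumpPoly z i :=
  dvd_prod_of_mem _ (mem_erase.2 ⟨h, mem_univ m⟩)

variable [DecidableEq σ]

noncomputable def linearPoly (ℓ : (σ → ℝ) →ₗ[ℝ] ℝ) : MvPolynomial σ ℝ :=
  ∑ t, ℓ (Pi.single t 1) • X t

theorem eval_linearPoly (ℓ : (σ → ℝ) →ₗ[ℝ] ℝ) (x : σ → ℝ) : eval x (linearPoly ℓ) = ℓ x := by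
  conv_rhs => rw [← univ_sum_single x]
  simp only [linearPoly, map_sum, smul_eval, eval_X]
  refine sum_congr rfl fun t _ => ?_
  rw [mul_comm, ← smul_eq_mul, ← map_smul, ← Pi.single_smul', smul_eq_mul, mul_one]

theorem totalDegree_linearPoly_le (ℓ : (σ → ℝ) →ₗ[ℝ] ℝ) : (linearPoly ℓ).totalDegree ≤ 1 := by
  refine (totalDegree_finsetSum _ _).trans (Finset.sup_le fun t _ => ?_)
  exact (totalDegree_smul_le _ _).trans (totalDegree_X t).le

theorem hasFDerivAt_eval_linearPoly_sub_C (ℓ : (σ → ℝ) →ₗ[ℝ] ℝ) (c : ℝ) (x : σ → ℝ) :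
    HasFDerivAt (fun x => eval x (linearPoly ℓ - C c)) ℓ.toContinuousLinearMap x := by
  simpa [eval_linearPoly] using ℓ.toContinuousLinearMap.hasFDerivAt.sub_const c

noncomputable def interpolantTerm (z : ι → σ → ℝ) (ℓ : ι → (σ → ℝ) →ₗ[ℝ] ℝ) (i : ι) :
    MvPolynomial σ ℝ :=
  C (eval (z i) (bumpPoly z i))⁻¹ * ((linearPoly (ℓ i) - C (ℓ i (z i))) * bumpPoly z i)

noncomputable def gradientInterpolant (z : ι → σ → ℝ) (ℓ : ι → (σ → ℝ) →ₗ[ℝ] ℝ) :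
    MvPolynomial σ ℝ :=
  ∑ i, interpolantTerm z ℓ i

theorem totalDegree_interpolantTerm_le (z : ι → σ → ℝ) (ℓ : ι → (σ → ℝ) →ₗ[ℝ] ℝ) (i : ι) :
    (interpolantTerm z ℓ i).totalDegree ≤ 1 + 2 * (Fintype.card ι - 1) := by
  have hbump : (bumpPoly z i).totalDegree ≤ 2 * (Fintype.card ι - 1) := by
    refine (totalDegree_finsetProd _ _).trans ?_
    simpa [card_erase_of_mem (mem_univ i), mul_comm] using
      sum_le_sum fun j (_ : j ∈ univ.erase i) => totalDegree_sqDist_le (z j)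
  have hlin := (totalDegree_sub_C_le (linearPoly (ℓ i)) (ℓ i (z i))).trans
    (totalDegree_linearPoly_le (ℓ i))
  refine (totalDegree_mul _ _).trans ?_
  rw [totalDegree_C, zero_add]
  exact (totalDegree_mul _ _).trans (add_le_add hlin hbump)

theorem totalDegree_gradientInterpolant_le (z : ι → σ → ℝ) (ℓ : ι → (σ → ℝ) →ₗ[ℝ] ℝ) :
    (gradientInterpolant z ℓ).totalDegree ≤ 2 * Fintype.card ι - 1 := by
  refine (totalDegree_finsetSum _ _).trans (Finset.sup_le fun i _ => ?_)
  have hcard := Fintype.card_pos_iff.2 ⟨i⟩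
  have := totalDegree_interpolantTerm_le z ℓ i
  omega

theorem hasFDerivAt_eval_interpolantTerm_self {z : ι → σ → ℝ} (hz : Function.Injective z)
    (ℓ : ι → (σ → ℝ) →ₗ[ℝ] ℝ) (m : ι) :
    HasFDerivAt (fun x => eval x (interpolantTerm z ℓ m)) (ℓ m).toContinuousLinearMap (z m) := by
  rw [interpolantTerm, mul_left_comm]
  refine (hasFDerivAt_eval_mul_of_eval_eq_zero (hasFDerivAt_eval_linearPoly_sub_C _ _ _)
    (by simp [eval_linearPoly])).congr_fderiv ?_
  simp [inv_mul_cancel₀ (eval_bumpPoly_self_ne_zero hz m)]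

theorem sqDist_dvd_interpolantTerm (z : ι → σ → ℝ) (ℓ : ι → (σ → ℝ) →ₗ[ℝ] ℝ) {i m : ι}
    (h : m ≠ i) : sqDist (z m) ∣ interpolantTerm z ℓ i :=
  ((sqDist_dvd_bumpPoly z h).mul_left _).mul_left _

theorem hasFDerivAt_eval_gradientInterpolant {z : ι → σ → ℝ} (hz : Function.Injective z)
    (ℓ : ι → (σ → ℝ) →ₗ[ℝ] ℝ) (m : ι) :
    HasFDerivAt (fun x => eval x (gradientInterpolant z ℓ)) (ℓ m).toContinuousLinearMap (z m) := by
  have hrest : HasFDerivAt (fun x => eval x (∑ i ∈ univ.erase m, interpolantTerm z ℓ i))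
      (0 : (σ → ℝ) →L[ℝ] ℝ) (z m) :=
    hasFDerivAt_eval_eq_zero_of_dvd (hasFDerivAt_eval_sqDist_self (z m))
      (by simp [eval_sqDist]) (dvd_sum fun i hi =>
        sqDist_dvd_interpolantTerm z ℓ (ne_of_mem_erase hi).symm)
  rw [gradientInterpolant, ← add_sum_erase _ _ (mem_univ m)]
  simp only [map_add]
  exact ((hasFDerivAt_eval_interpolantTerm_self hz ℓ m).add hrest).congr_fderiv (add_zero _)

theorem stmt8_general {N k : ℕ}
    (z : Fin k → (Fin N → ℝ)) (hz : Function.Injective z)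
    (E : Fin k → Submodule ℝ (Fin N → ℝ))
    (L : ∀ i : Fin k, (E i) →ₗ[ℝ] ℝ) :
    ∃ p : MvPolynomial (Fin N) ℝ, p.totalDegree ≤ 2 * k - 1 ∧
      ∀ (i : Fin k) (v : E i),
        fderiv ℝ (fun x : Fin N → ℝ => MvPolynomial.eval x p) (z i) (v : Fin N → ℝ)
          = L i v := by
  choose ℓ hℓ using fun i => (L i).exists_extend
  refine ⟨gradientInterpolant z ℓ, by simpa using totalDegree_gradientInterpolant_le z ℓ,
    fun i v => ?_⟩
  rw [(hasFDerivAt_eval_gradientInterpolant hz ℓ i).fderiv]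
  exact LinearMap.congr_fun (hℓ i) v

/-- Tangential gradient interpolation on a submanifold: let `M ⊆ ℝ^N` be (an embedded C¹
submanifold, whose tangent space at a point `zᵢ ∈ M` is the linear subspace `E i ⊆ ℝ^N`).
Given `k` distinct points `z₁,…,z_k ∈ M` and linear functionals `Lᵢ : E i → ℝ`, there is an
`N`-variate polynomial `p` of degree at most `2k−1` whose differential at `zᵢ`, restricted to
the tangent space `E i` (i.e. the differential of `p|_M` at `zᵢ`), equals `Lᵢ` for each `i`. -/
theorem stmt8 {N k : ℕ} (M : Set (Fin N → ℝ))
    (z : Fin k → (Fin N → ℝ)) (hzM : ∀ i, z i ∈ M) (hz : Function.Injective z)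
    (E : Fin k → Submodule ℝ (Fin N → ℝ))
    (L : ∀ i : Fin k, (E i) →ₗ[ℝ] ℝ) :
    ∃ p : MvPolynomial (Fin N) ℝ, p.totalDegree ≤ 2 * k - 1 ∧
      ∀ (i : Fin k) (v : E i),
        fderiv ℝ (fun x : Fin N → ℝ => MvPolynomial.eval x p) (z i) (v : Fin N → ℝ)
          = L i v :=
  stmt8_general z hz E L
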